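/- arXiv:math/0512421 — 3 statements merged into one kernel-verified Lean document; each statement's English description precedes it below -/
import Mathlib

section
/- The circulant graph G_{{4,5}} embeds as a subgraph into the circulant graph G_{{3,4}}: G_{{4,5}} ↪ G_{{3,4}}. Moreover, G_{{4,5}} embeds as a subgraph into G_{{2,3}}: G_{{4,5}} ↪ G_{{2,3}}. -/
open SimpleGraph

/-- The circulant graph `G_D` on `ZMod 10`: distinct `i, j` are adjacent iff
`i - j ∈ D` or `j - i ∈ D`. -/
def circ (D : Set (ZMod 10)) : SimpleGraph (ZMod 10) :=
  SimpleGraph.fromRel (fun i j => i - j ∈ D)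

/-- The Petersen graph: vertices are the 2-element subsets of a 5-element set,
adjacent iff disjoint. -/
def petersen : SimpleGraph {s : Finset (Fin 5) // s.card = 2} where
  Adj a b := Disjoint a.1 b.1
  symm := ⟨fun a b h => h.symm⟩
  loopless := ⟨fun a h => by
    have h0 : a.1 = ∅ := by simpa using disjoint_self.mp h
    have h2 := a.2
    rw [h0] at h2
    simp at h2⟩

/-!
`G_{4,5}` is the pentagonal prism: the differences `±4` give the two pentagons on the even and
on the odd residues, and the difference `5` joins `i` to `i + 5`, of the other parity. A map
`f i = u * i + c * [i odd]` with `u` an odd unit and `c` even preserves parity, hence is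
injective; it sends a pentagon edge to an edge of difference `±4u` and a rung to one of
difference `±(5u ± c)`. Both `(u, c) = (-1, 2)` and `(u, c) = (3, 2)` land in the right sets
of differences: `{±4, ±3}` and `{±2, ±3}` respectively.
-/

section ParityAffine

variable {R : Type*} [Ring R] (π : R →+* ZMod 2)

def parityAffine (u c x : R) : R := u * x + if π x = 0 then 0 else c

variable {π} {u c : R}

theorem parity_parityAffine (hu : π u = 1) (hc : π c = 0) (x : R) :
    π (parityAffine π u c x) = π x := by
  unfold parityAffine
  split_ifs <;> simp [hu, hc]

theorem parityAffine_injective (hu : IsUnit u) (hu1 : π u = 1) (hc : π c = 0) :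
    Function.Injective (parityAffine π u c) := by
  intro x y hxy
  have hπ : π x = π y := by
    rw [← parity_parityAffine hu1 hc x, hxy, parity_parityAffine hu1 hc y]
  unfold parityAffine at hxy
  rw [hπ, add_left_inj] at hxy
  exact hu.mul_left_cancel hxy

theorem parityAffine_sub_sub_of_even {d : R} (hd : π d = 0) (x : R) :
    parityAffine π u c x - parityAffine π u c (x - d) = u * d := by
  simp [parityAffine, hd, mul_sub]

theorem parityAffine_sub_sub_of_odd {d : R} (hd : π d = 1) (x : R) :
    parityAffine π u c x - parityAffine π u c (x - d) = u * d + c ∨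
      parityAffine π u c x - parityAffine π u c (x - d) = u * d - c := by
  unfold parityAffine
  have h01 : ∀ p : ZMod 2, p = 0 ∨ p = 1 := by decide
  rcases h01 (π x) with hx | hx
  · right
    simp only [hx, map_sub, hd, zero_sub, neg_eq_zero, one_ne_zero, if_false, if_true, mul_sub]
    abel
  · left
    simp only [hx, map_sub, hd, sub_self, if_true, one_ne_zero, if_false, mul_sub]
    abel

end ParityAffine

section Circulant

variable {D D' : Set (ZMod 10)}

theorem circ_adj_iff {a b : ZMod 10} : (circ D).Adj a b ↔ a ≠ b ∧ (a - b ∈ D ∨ b - a ∈ D) :=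
  fromRel_adj _ _ _

theorem circ_adj_of_mem (h0 : (0 : ZMod 10) ∉ D) {a b : ZMod 10} (h : a - b ∈ D ∨ b - a ∈ D) :
    (circ D).Adj a b :=
  circ_adj_iff.2 ⟨by rintro rfl; simp_all, h⟩

theorem circ_adj_iff_adj_sub_zero {a b : ZMod 10} : (circ D).Adj a b ↔ (circ D).Adj (a - b) 0 := by
  simp only [circ_adj_iff, ne_eq, sub_eq_zero, sub_zero, zero_sub, neg_sub]

def circHomOfAdjSub (f : ZMod 10 → ZMod 10) (hf : ∀ x, ∀ d ∈ D, (circ D').Adj (f x) (f (x - d))) :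
    circ D →g circ D' where
  toFun := f
  map_rel' {a b} hab := by
    rcases (circ_adj_iff.1 hab).2 with h | h
    · simpa using hf a _ h
    · simpa using (hf b _ h).symm

end Circulant

abbrev parity10 : ZMod 10 →+* ZMod 2 := ZMod.castHom (by norm_num) _

theorem exists_injective_hom_circ_of_parityAffine {D : Set (ZMod 10)} {u c : ZMod 10}
    (hu : IsUnit u) (hu1 : parity10 u = 1) (hc : parity10 c = 0)
    (h4 : (circ D).Adj (u * 4) 0) (h5 : (circ D).Adj (u * 5 + c) 0)
    (h5' : (circ D).Adj (u * 5 - c) 0) :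
    ∃ f : circ {4, 5} →g circ D, Function.Injective f := by
  refine ⟨circHomOfAdjSub (parityAffine parity10 u c) ?_, parityAffine_injective hu hu1 hc⟩
  rintro x d (rfl | rfl) <;> rw [circ_adj_iff_adj_sub_zero]
  · rwa [parityAffine_sub_sub_of_even (by decide)]
  · obtain h | h := parityAffine_sub_sub_of_odd (u := u) (c := c) (by decide : parity10 5 = 1) x
    · rwa [h]
    · rwa [h]

/-- Subgraph embeddings: `G_{{4,5}} ↪ G_{{3,4}}` and `G_{{4,5}} ↪ G_{{2,3}}`. -/
theorem stmt_13 :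
    (∃ f : circ {4, 5} →g circ {3, 4}, Function.Injective f) ∧
    (∃ f : circ {4, 5} →g circ {2, 3}, Function.Injective f) :=
  ⟨exists_injective_hom_circ_of_parityAffine (u := -1) (c := 2) (by decide) (by decide) (by decide)
      (circ_adj_of_mem (by decide) (by decide)) (circ_adj_of_mem (by decide) (by decide))
      (circ_adj_of_mem (by decide) (by decide)),
    exists_injective_hom_circ_of_parityAffine (u := 3) (c := 2) (by decide) (by decide) (by decide)
      (circ_adj_of_mem (by decide) (by decide)) (circ_adj_of_mem (by decide) (by decide))
      (circ_adj_of_mem (by decide) (by decide))⟩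
end

section
/- The circulant graph G_{{3,5}} embeds as a subgraph into the circulant graph G_{{1,3}}: G_{{3,5}} ↪ G_{{1,3}}. Moreover, G_{{3,5}} embeds as a subgraph into G_{{2,3,4}}: G_{{3,5}} ↪ G_{{2,3,4}}. -/
open SimpleGraph

instance (D : Set (ZMod 10)) [DecidablePred (· ∈ D)] : DecidableRel (circ D).Adj :=
  fun i j => decidable_of_iff _ (fromRel_adj _ i j).symm

theorem circ_adj_map_of_forall_adj_add {D E : Set (ZMod 10)} {f : ZMod 10 → ZMod 10}
    (hf : ∀ i, ∀ d ∈ D, d ≠ 0 → (circ E).Adj (f (i + d)) (f i)) {i j : ZMod 10}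
    (hij : (circ D).Adj i j) : (circ E).Adj (f i) (f j) := by
  obtain ⟨hne, hij | hji⟩ := (fromRel_adj _ i j).mp hij
  · simpa using hf j (i - j) hij (sub_ne_zero.mpr hne)
  · simpa using (hf i (j - i) hji (sub_ne_zero.mpr hne.symm)).symm

/-- Multiplication by `7` maps `G_{3,5}` isomorphically onto the Möbius ladder `G_{1,5}`;
adding `2` to the odd vertices then turns its steps `±1` and `5` into steps `±1` and `±3`. -/
def circ35ToCirc13 (i : ZMod 10) : ZMod 10 :=
  7 * i + 2 * (i.val % 2 : ℕ)

theorem circ35ToCirc13_injective : Function.Injective circ35ToCirc13 := by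
  decide

theorem circ35ToCirc13_adj {i j : ZMod 10} :
    (circ {3, 5}).Adj i j → (circ {1, 3}).Adj (circ35ToCirc13 i) (circ35ToCirc13 j) :=
  circ_adj_map_of_forall_adj_add <| by
    simp only [Set.forall_mem_insert, Set.mem_singleton_iff, forall_eq]
    decide

def circ35ToCirc234 : ZMod 10 → ZMod 10 :=
  ![0, 1, 2, 3, 8, 4, 9, 6, 7, 5]

theorem circ35ToCirc234_injective : Function.Injective circ35ToCirc234 := by
  decide

theorem circ35ToCirc234_adj {i j : ZMod 10} :
    (circ {3, 5}).Adj i j → (circ {2, 3, 4}).Adj (circ35ToCirc234 i) (circ35ToCirc234 j) :=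
  circ_adj_map_of_forall_adj_add <| by
    simp only [Set.forall_mem_insert, Set.mem_singleton_iff, forall_eq]
    decide

/-- Subgraph embeddings: `G_{{3,5}} ↪ G_{{1,3}}` and `G_{{3,5}} ↪ G_{{2,3,4}}`. -/
theorem stmt_14 :
    (∃ f : circ {3, 5} →g circ {1, 3}, Function.Injective f) ∧
    (∃ f : circ {3, 5} →g circ {2, 3, 4}, Function.Injective f) :=
  ⟨⟨⟨circ35ToCirc13, circ35ToCirc13_adj⟩, circ35ToCirc13_injective⟩,
    ⟨⟨circ35ToCirc234, circ35ToCirc234_adj⟩, circ35ToCirc234_injective⟩⟩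
end

section
/- The circulant graph G_{{2,3}} embeds as a subgraph into the circulant graph G_{{3,4,5}}: G_{{2,3}} ↪ G_{{3,4,5}}. Moreover, G_{{3,4}} embeds as a subgraph into G_{{2,3,5}}: G_{{3,4}} ↪ G_{{2,3,5}}. -/
open SimpleGraph

/-! The single bijection `2k + e ↦ 4k + e` (`e ∈ {0, 1}`) of `ZMod 10` works for both embeddings:
it turns the steps `2, 3, 4` into steps `4`, `5` or `-3`, and `-2`, so it maps `G_{2,3}` into
`G_{3,4,5}` and `G_{3,4}` into `G_{2,3,5}`. -/

section Cayley

variable {G H : Type*} [AddGroup G] {D : Set G}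

theorem fromRel_sub_mem_adj_iff {x y : G} :
    (fromRel fun i j : G => i - j ∈ D).Adj x y ↔ x - y ≠ 0 ∧ (x - y ∈ D ∨ -(x - y) ∈ D) := by
  simp only [fromRel_adj, ne_eq, sub_eq_zero, neg_sub]

theorem adj_of_forall_mem_adj_add {K : SimpleGraph H} (f : G → H)
    (hf : ∀ a, ∀ d ∈ D, K.Adj (f (d + a)) (f a)) {x y : G}
    (hxy : (fromRel fun i j : G => i - j ∈ D).Adj x y) : K.Adj (f x) (f y) := by
  rcases hxy with ⟨-, hxy | hyx⟩
  · simpa only [sub_add_cancel] using hf y _ hxy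
  · simpa only [sub_add_cancel] using (hf x _ hyx).symm

end Cayley

def stretch (x : ZMod 10) : ZMod 10 := 2 * x - (x.val % 2 : ℕ)

theorem stretch_injective : Function.Injective stretch := by decide

theorem stretch_two_add_sub : ∀ x, stretch (2 + x) - stretch x = 4 := by decide

theorem stretch_three_add_sub :
    ∀ x, stretch (3 + x) - stretch x = 5 ∨ stretch (3 + x) - stretch x = -3 := by decide

theorem stretch_four_add_sub : ∀ x, stretch (4 + x) - stretch x = -2 := by decide

/-- Subgraph embeddings: `G_{{2,3}} ↪ G_{{3,4,5}}` and `G_{{3,4}} ↪ G_{{2,3,5}}`. -/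
theorem stmt_15 :
    (∃ f : circ {2, 3} →g circ {3, 4, 5}, Function.Injective f) ∧
    (∃ f : circ {3, 4} →g circ {2, 3, 5}, Function.Injective f) := by
  constructor
  · refine ⟨⟨stretch, adj_of_forall_mem_adj_add stretch ?_⟩, stretch_injective⟩
    rintro a d (rfl | rfl) <;> rw [circ, fromRel_sub_mem_adj_iff]
    · rw [stretch_two_add_sub]; decide
    · rcases stretch_three_add_sub a with h | h <;> rw [h] <;> decide
  · refine ⟨⟨stretch, adj_of_forall_mem_adj_add stretch ?_⟩, stretch_injective⟩
    rintro a d (rfl | rfl) <;> rw [circ, fromRel_sub_mem_adj_iff]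
    · rcases stretch_three_add_sub a with h | h <;> rw [h] <;> decide
    · rw [stretch_four_add_sub]; decide
end
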